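/- arXiv:1112.0920 — 5 statements merged into one kernel-verified Lean document; each statement's English description precedes it below -/
import Mathlib

section
/- Let A ∈ GL_n(ℚ) with n > 1 such that the characteristic polynomial of A^m is irreducible over ℚ for all m ≥ 1. Let S be a nonempty subset of the set R of n-tuples of ℝ^n whose coordinates are ℚ-linearly independent, such that A(S) ⊆ S, rS = S for every nonzero real r, and S is closed in R. Then there exists γ ∈ S such that for every ε > 0 there are infinitely many integers m with ‖A^m(γ)/‖A^m(γ)‖ − γ/‖γ‖‖ < ε. -/
/-!
The map `x ↦ A x / ‖A x‖` is a continuous self-map of the unit sphere, and the closure of the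
unit vectors of `S` is a compact invariant set. By Zorn's lemma it contains a minimal nonempty
closed invariant set `M`, and every point of `M` is recurrent: the closure of any tail of its
orbit is again closed and invariant, hence all of `M`. A point of `M` with `ℚ`-independent
coordinates lies in `S`, because `S` is closed in `R`.

Such a point exists. Otherwise the countably many closed sets `{x | ∑ qᵢ xᵢ = 0}`, `q ∈ ℚⁿ \ 0`,
cover `M`, and by Baire one of them contains a relatively open piece of `M`. Take a maximal
space `Q` of rational forms vanishing on a relatively open piece `U` of `M`, a point `z ∈ U`,
and by recurrence some `m ≥ 1` sending `z` back into `U`. Then the forms of `Q` and of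
`(Aᵐ)ᵀ Q` all vanish near `z`, so `(Aᵐ)ᵀ Q ⊆ Q` by maximality. An endomorphism with
irreducible characteristic polynomial has no invariant subspaces other than `0` and the whole
space, so `Q = ℚⁿ` and `z = 0`, which is absurd on the sphere.
-/

open Set Filter Topology Matrix Polynomial NormedSpace

theorem Module.End.eq_top_of_irreducible_charpoly {K V : Type*} [Field K] [AddCommGroup V]
    [Module K V] [FiniteDimensional K V] {f : Module.End K V} (hf : Irreducible f.charpoly)
    {W : Submodule K V} (hW : ∀ x ∈ W, f x ∈ W) (hW0 : W ≠ ⊥) : W = ⊤ := by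
  have : Nontrivial W := Submodule.nontrivial_iff_ne_bot.mpr hW0
  set g := f.restrict hW
  have haeval (p : K[X]) (w : W) : (aeval g p w : V) = aeval f p w := by
    induction p using Polynomial.induction_on' with
    | add p q hp hq => simp [hp, hq]
    | monomial k a => simp [g, Module.End.pow_restrict k hW, Module.algebraMap_end_apply]
  have hg : aeval g f.charpoly = 0 :=
    LinearMap.ext fun w => Subtype.ext (by simp [haeval, LinearMap.aeval_self_charpoly])
  have hassoc : Associated f.charpoly (minpoly K g) :=
    (hf.dvd_iff.mp (minpoly.dvd K g hg)).resolve_left (minpoly.not_isUnit K g)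
  have hdeg : Module.finrank K V ≤ Module.finrank K W :=
    calc Module.finrank K V = (minpoly K g).natDegree := by
          rw [← f.charpoly_natDegree,
            natDegree_eq_of_degree_eq (degree_eq_degree_of_associated hassoc)]
      _ ≤ g.charpoly.natDegree :=
          natDegree_le_of_dvd (LinearMap.minpoly_dvd_charpoly g) g.charpoly_monic.ne_zero
      _ = Module.finrank K W := g.charpoly_natDegree
  exact Submodule.eq_top_of_finrank_eq (le_antisymm (Submodule.finrank_le W) hdeg)

section Recurrence

variable {X : Type*} [TopologicalSpace X] {g : X → X}

theorem IsCompact.exists_minimal_mapsTo {K : Set X} (hK : IsCompact K) (hKc : IsClosed K)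
    (hne : K.Nonempty) (hgK : MapsTo g K K) :
    ∃ M ⊆ K, Minimal (fun C => C ⊆ K ∧ C.Nonempty ∧ IsClosed C ∧ MapsTo g C C) M := by
  refine zorn_superset_nonempty _ (fun c hc hchain ⟨C₀, hC₀⟩ => ?_) K ⟨subset_rfl, hne, hKc, hgK⟩
  have : Nonempty c := ⟨⟨C₀, hC₀⟩⟩
  refine ⟨⋂₀ c, ⟨(sInter_subset_of_mem hC₀).trans (hc hC₀).1, ?_,
    isClosed_sInter fun C hC => (hc hC).2.2.1, fun x hx C hC => (hc hC).2.2.2 (hx C hC)⟩,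
    fun C hC => sInter_subset_of_mem hC⟩
  exact IsCompact.nonempty_sInter_of_directed_nonempty_isCompact_isClosed
    (IsChain.directedOn hchain.symm) (fun C hC => (hc hC).2.1)
    (fun C hC => hK.of_isClosed_subset (hc hC).2.2.1 (hc hC).1) fun C hC => (hc hC).2.2.1

theorem Minimal.mapClusterPt_iterate {K M : Set X}
    (hM : Minimal (fun C => C ⊆ K ∧ C.Nonempty ∧ IsClosed C ∧ MapsTo g C C) M)
    (hg : ContinuousOn g M) {x : X} (hx : x ∈ M) :
    MapClusterPt x atTop (fun m => g^[m] x) := by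
  obtain ⟨⟨hMK, -, hMc, hgM⟩, hmin⟩ := hM
  refine mapClusterPt_atTop_iff_forall_mem_closure.2 fun N => ?_
  set tail := (fun m => g^[m] x) '' Ici N
  have htail : tail ⊆ M := by
    rintro - ⟨m, -, rfl⟩
    exact hgM.iterate m hx
  have hclosure : closure tail ⊆ M := closure_minimal htail hMc
  have hmaps : MapsTo g tail tail := by
    rintro - ⟨m, hm, rfl⟩
    exact ⟨m + 1, Nat.le_succ_of_le hm, Function.iterate_succ_apply' g m x⟩
  exact hmin ⟨hclosure.trans hMK, (nonempty_Ici.image _).closure, isClosed_closure,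
    hmaps.closure_of_continuousOn (hg.mono hclosure)⟩ hclosure hx

end Recurrence

theorem IsCompact.exists_mem_nhdsWithin_of_subset_iUnion {X ι : Type*} [TopologicalSpace X]
    [T2Space X] [Countable ι] {M : Set X} (hM : IsCompact M) (hne : M.Nonempty)
    {F : ι → Set X} (hF : ∀ i, IsClosed (F i)) (hcover : M ⊆ ⋃ i, F i) :
    ∃ i, ∃ z ∈ M, F i ∈ 𝓝[M] z := by
  have := isCompact_iff_compactSpace.mp hM
  have := hne.to_subtype
  obtain ⟨i, z, hz⟩ := nonempty_interior_of_iUnion_of_closed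
    (f := fun i => ((↑) : M → X) ⁻¹' F i) (fun i => (hF i).preimage continuous_subtype_val)
    (eq_univ_of_forall fun x => by simpa using hcover x.2)
  exact ⟨i, z, z.2, mem_of_superset (mem_nhds_subtype_iff_nhdsWithin.1
    (mem_interior_iff_mem_nhds.1 hz)) (image_preimage_subset _ _)⟩

namespace NormedSpace

variable {E : Type*} [NormedAddCommGroup E] [NormedSpace ℝ E]

theorem normalize_apply_normalize (B : E →ₗ[ℝ] E) (x : E) :
    normalize (B (normalize x)) = normalize (B x) := by
  rcases eq_or_ne x 0 with rfl | hx
  · simp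
  · rw [show normalize x = ‖x‖⁻¹ • x from rfl, map_smul,
      normalize_smul_of_pos (inv_pos.2 (norm_pos_iff.2 hx))]

theorem iterate_normalize_comp (B : E →ₗ[ℝ] E) (x : E) (m : ℕ) :
    (NormedSpace.normalize ∘ B)^[m] (normalize x) = normalize ((B ^ m) x) := by
  induction m with
  | zero => rfl
  | succ m ih =>
    rw [Function.iterate_succ_apply', ih, Function.comp_apply, normalize_apply_normalize,
      pow_succ', Module.End.mul_apply]

theorem continuousOn_normalize_comp [FiniteDimensional ℝ E] {B : E →ₗ[ℝ] E}
    (hB : Function.Injective B) : ContinuousOn (NormedSpace.normalize ∘ B) {0}ᶜ := fun _ hx =>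
  (((continuous_norm.continuousAt.inv₀ (norm_ne_zero_iff.2 ((map_ne_zero_iff B hB).2 hx))).smul
    continuousAt_id).comp B.continuous_of_finiteDimensional.continuousAt).continuousWithinAt

end NormedSpace

theorem Matrix.toEuclideanLin_map_pow {ι : Type*} [Fintype ι] [DecidableEq ι]
    (A : Matrix ι ι ℚ) (m : ℕ) :
    toEuclideanLin ((A ^ m).map (fun q : ℚ => (q : ℝ))) =
      toEuclideanLin (A.map (fun q : ℚ => (q : ℝ))) ^ m := by
  rw [← toLpLin_pow]
  exact congrArg _ (Matrix.map_pow A (Rat.castHom ℝ) m)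

section RationalForms

variable {ι : Type*} [Fintype ι]

def realZeroSet (Q : Submodule ℚ (ι → ℚ)) : Set (EuclideanSpace ℝ ι) :=
  {x | ∀ q ∈ Q, ∑ i, (q i : ℝ) * x i = 0}

theorem isClosed_realZeroSet (Q : Submodule ℚ (ι → ℚ)) : IsClosed (realZeroSet Q) := by
  simp only [realZeroSet, ofPred_forall]
  exact isClosed_biInter fun q _ => isClosed_eq (by fun_prop) continuous_const

theorem realZeroSet_sup (Q Q' : Submodule ℚ (ι → ℚ)) :
    realZeroSet (Q ⊔ Q') = realZeroSet Q ∩ realZeroSet Q' := by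
  ext x
  refine ⟨fun hx => ⟨fun q hq => hx q (Submodule.mem_sup_left hq),
    fun q hq => hx q (Submodule.mem_sup_right hq)⟩, ?_⟩
  rintro ⟨hx, hx'⟩ p hp
  obtain ⟨q, hq, q', hq', rfl⟩ := Submodule.mem_sup.1 hp
  simp only [Pi.add_apply, Rat.cast_add, add_mul, Finset.sum_add_distrib, hx q hq, hx' q' hq',
    add_zero]

theorem smul_mem_realZeroSet_iff {Q : Submodule ℚ (ι → ℚ)} {c : ℝ} (hc : c ≠ 0)
    {x : EuclideanSpace ℝ ι} : c • x ∈ realZeroSet Q ↔ x ∈ realZeroSet Q := by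
  have (q : ι → ℚ) : ∑ i, (q i : ℝ) * (c • x) i = c * ∑ i, (q i : ℝ) * x i := by
    simp only [PiLp.smul_apply, smul_eq_mul, Finset.mul_sum, mul_left_comm]
  exact forall₂_congr fun q _ => by rw [this, mul_eq_zero, or_iff_right hc]

theorem normalize_mem_realZeroSet_iff {Q : Submodule ℚ (ι → ℚ)} {x : EuclideanSpace ℝ ι} :
    normalize x ∈ realZeroSet Q ↔ x ∈ realZeroSet Q := by
  rcases eq_or_ne x 0 with rfl | hx
  · simp
  · exact smul_mem_realZeroSet_iff (inv_ne_zero (norm_ne_zero_iff.2 hx))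

theorem eq_zero_of_mem_realZeroSet_top [DecidableEq ι] {x : EuclideanSpace ℝ ι}
    (hx : x ∈ realZeroSet ⊤) : x = 0 := by
  ext i
  simpa [Pi.single_apply, apply_ite, ite_mul] using hx (Pi.single i 1) Submodule.mem_top

theorem exists_mem_realZeroSet_span_singleton {x : EuclideanSpace ℝ ι}
    (hx : ¬LinearIndependent ℚ (fun i => x i)) : ∃ q ≠ 0, x ∈ realZeroSet (ℚ ∙ q) := by
  obtain ⟨q, hq, i, hi⟩ := Fintype.not_linearIndependent_iff.1 hx
  refine ⟨q, fun h => hi (by simp [h]), fun p hp => ?_⟩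
  obtain ⟨a, rfl⟩ := Submodule.mem_span_singleton.1 hp
  simp only [Rat.smul_def] at hq
  simp [mul_assoc, ← Finset.mul_sum, hq]

theorem toEuclideanLin_mem_realZeroSet_iff [DecidableEq ι] (D : Matrix ι ι ℚ)
    {Q : Submodule ℚ (ι → ℚ)} {x : EuclideanSpace ℝ ι} :
    toEuclideanLin (D.map (fun q : ℚ => (q : ℝ))) x ∈ realZeroSet Q ↔
      x ∈ realZeroSet (Q.map Dᵀ.mulVecLin) := by
  have (q : ι → ℚ) : ∑ i, (q i : ℝ) * toEuclideanLin (D.map (fun q : ℚ => (q : ℝ))) x i =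
      ∑ i, ((Dᵀ *ᵥ q) i : ℝ) * x i := by
    change (Rat.castHom ℝ ∘ q) ⬝ᵥ (D.map (Rat.castHom ℝ) *ᵥ x.ofLp) = _
    rw [dotProduct_mulVec, mulVec_transpose]
    exact Finset.sum_congr rfl fun i _ => by rw [← RingHom.map_vecMul]; rfl
  constructor
  · rintro h - ⟨q, hq, rfl⟩
    rw [mulVecLin_apply, ← this]
    exact h q hq
  · intro h q hq
    rw [this]
    exact h _ ⟨q, hq, rfl⟩

variable [DecidableEq ι] {A : Matrix ι ι ℚ}

theorem exists_linearIndependent_of_forall_mapClusterPt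
    (hirr : ∀ m : ℕ, 1 ≤ m → Irreducible (A ^ m).charpoly) {M : Set (EuclideanSpace ℝ ι)}
    (hM : IsCompact M) (hne : M.Nonempty) (hM1 : M ⊆ Metric.sphere 0 1)
    (hgM : MapsTo (NormedSpace.normalize ∘ toEuclideanLin (A.map (fun q : ℚ => (q : ℝ)))) M M)
    (hg : ContinuousOn (NormedSpace.normalize ∘ toEuclideanLin (A.map (fun q : ℚ => (q : ℝ)))) M)
    (hrec : ∀ x ∈ M, MapClusterPt x atTop
      (fun m => (NormedSpace.normalize ∘ toEuclideanLin (A.map (fun q : ℚ => (q : ℝ))))^[m] x)) :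
    ∃ x ∈ M, LinearIndependent ℚ (fun i => x i) := by
  set g := NormedSpace.normalize ∘ toEuclideanLin (A.map (fun q : ℚ => (q : ℝ)))
  by_contra! hdep
  obtain ⟨Q, ⟨hQ0, z, hzM, hz⟩, hQmax⟩ := exists_maximal_of_wellFoundedGT
    (fun Q : Submodule ℚ (ι → ℚ) => Q ≠ ⊥ ∧ ∃ z ∈ M, realZeroSet Q ∈ 𝓝[M] z) (by
      obtain ⟨⟨q, hq⟩, z, hzM, hz⟩ := hM.exists_mem_nhdsWithin_of_subset_iUnion hne
        (F := fun q : {q : ι → ℚ // q ≠ 0} => realZeroSet (ℚ ∙ q.1))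
        (fun _ => isClosed_realZeroSet _) fun x hx => by
          obtain ⟨q, hq, hxq⟩ := exists_mem_realZeroSet_span_singleton (hdep x hx)
          exact mem_iUnion.2 ⟨⟨q, hq⟩, hxq⟩
      exact ⟨ℚ ∙ q, by simpa using hq, z, hzM, hz⟩)
  obtain ⟨U, hUo, hzU, hUQ⟩ := mem_nhdsWithin.1 hz
  obtain ⟨m, hm, hmU⟩ := (mapClusterPt_iff_frequently.1 (hrec z hzM) U
    (hUo.mem_nhds hzU)).forall_exists_of_atTop 1
  have hpre : (g^[m]) ⁻¹' realZeroSet Q ∈ 𝓝[M] z :=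
    ((hg.iterate hgM m) z hzM).preimage_mem_nhdsWithin' (nhdsWithin_mono _
      (image_subset_iff.2 (hgM.iterate m)) (mem_nhdsWithin.2 ⟨U, hUo, hmU, hUQ⟩))
  have hinv : Q.map (A ^ m)ᵀ.mulVecLin ≤ Q := by
    refine le_sup_right.trans
      (hQmax ⟨fun h => hQ0 (eq_bot_mono le_sup_left h), z, hzM, ?_⟩ le_sup_left)
    filter_upwards [hz, hpre, self_mem_nhdsWithin] with x hxQ hxm hxM
    rw [mem_preimage, ← normalize_eq_self_of_norm_eq_one (x := x) (by simpa using hM1 hxM),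
      iterate_normalize_comp, normalize_mem_realZeroSet_iff, ← toEuclideanLin_map_pow,
      toEuclideanLin_mem_realZeroSet_iff] at hxm
    rw [realZeroSet_sup]
    exact ⟨hxQ, hxm⟩
  have htop : Q = ⊤ := Module.End.eq_top_of_irreducible_charpoly
    (f := (A ^ m)ᵀ.mulVecLin) (by rw [charpoly_mulVecLin, charpoly_transpose]; exact hirr m hm)
    (fun q hq => hinv (Submodule.mem_map_of_mem hq)) hQ0
  have hz0 := eq_zero_of_mem_realZeroSet_top (htop ▸ mem_of_mem_nhdsWithin hzM hz)
  simpa [hz0] using hM1 hzM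

theorem exists_mem_closure_linearIndependent_mapClusterPt (hA : IsUnit A)
    (hirr : ∀ m : ℕ, 1 ≤ m → Irreducible (A ^ m).charpoly) {T : Set (EuclideanSpace ℝ ι)}
    (hT1 : T ⊆ Metric.sphere 0 1) (hne : T.Nonempty)
    (hgT : MapsTo (NormedSpace.normalize ∘ toEuclideanLin (A.map (fun q : ℚ => (q : ℝ)))) T T) :
    ∃ z ∈ closure T, LinearIndependent ℚ (fun i => z i) ∧ MapClusterPt z atTop
      (fun m => (NormedSpace.normalize ∘ toEuclideanLin (A.map (fun q : ℚ => (q : ℝ))))^[m] z) := by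
  set B := toEuclideanLin (A.map (fun q : ℚ => (q : ℝ)))
  have hB : Function.Injective B := ((Module.End.isUnit_iff _).1
    ((hA.map (Rat.castHom ℝ).mapMatrix).map (toLpLinAlgEquiv (p := 2)))).1
  have hK1 : closure T ⊆ Metric.sphere 0 1 := closure_minimal hT1 Metric.isClosed_sphere
  have hg : ContinuousOn (NormedSpace.normalize ∘ B) (closure T) :=
    (continuousOn_normalize_comp hB).mono fun x hx (h : x = 0) => by simpa [h] using hK1 hx
  have hK : IsCompact (closure T) :=
    (isCompact_sphere 0 1).of_isClosed_subset isClosed_closure hK1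
  obtain ⟨M, hMK, hMmin⟩ := hK.exists_minimal_mapsTo isClosed_closure hne.closure
    (hgT.closure_of_continuousOn hg)
  obtain ⟨-, hMne, hMc, hgM⟩ := hMmin.prop
  have hrec := fun x (hx : x ∈ M) => hMmin.mapClusterPt_iterate (hg.mono hMK) hx
  obtain ⟨z, hzM, hz⟩ := exists_linearIndependent_of_forall_mapClusterPt hirr
    (hK.of_isClosed_subset hMc hMK) hMne (hMK.trans hK1) hgM (hg.mono hMK) hrec
  exact ⟨z, hMK hzM, hz, hrec z hzM⟩

end RationalForms

/-- Lemma (3.12) of the paper: let `A ∈ GL_n(ℚ)`, `n > 1`, with the characteristic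
polynomial of every power `A^m` (`m ≥ 1`) irreducible over `ℚ`.  Let `S` be a nonempty
subset of the set `R` of vectors of `ℝ^n` with `ℚ`-linearly independent coordinates, with
`A(S) ⊆ S`, `rS = S` for every nonzero real `r`, and `S` closed in `R`.  Then there is
`γ ∈ S` such that for every `ε > 0` there are infinitely many `m` with
`‖A^m(γ)/‖A^m(γ)‖ − γ/‖γ‖‖ < ε`. -/
theorem recurrent_direction_exists {n : ℕ} (hn : 1 < n)
    (A : Matrix (Fin n) (Fin n) ℚ) (hA : IsUnit A)
    (hirr : ∀ m : ℕ, 1 ≤ m → Irreducible (Matrix.charpoly (A ^ m)))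
    (S : Set (EuclideanSpace ℝ (Fin n)))
    (hSR : ∀ γ ∈ S, LinearIndependent ℚ (fun i : Fin n => γ i))
    (hS : S.Nonempty)
    (hAS : ∀ γ ∈ S, Matrix.toEuclideanLin (A.map (fun q : ℚ => (q : ℝ))) γ ∈ S)
    (hscale : ∀ r : ℝ, r ≠ 0 → (fun γ : EuclideanSpace ℝ (Fin n) => r • γ) '' S = S)
    (hclosed : IsClosed
      {γ : {x : EuclideanSpace ℝ (Fin n) // LinearIndependent ℚ (fun i : Fin n => x i)} |
        (γ : EuclideanSpace ℝ (Fin n)) ∈ S}) :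
    ∃ γ ∈ S, ∀ ε : ℝ, 0 < ε →
      {m : ℕ |
        ‖(‖Matrix.toEuclideanLin ((A ^ m).map (fun q : ℚ => (q : ℝ))) γ‖)⁻¹ •
            Matrix.toEuclideanLin ((A ^ m).map (fun q : ℚ => (q : ℝ))) γ -
          ‖γ‖⁻¹ • γ‖ < ε}.Infinite := by
  have hnormalize {x : EuclideanSpace ℝ (Fin n)} (hx : x ∈ S) :
      normalize x ∈ S ∩ Metric.sphere 0 1 := by
    have hx0 : x ≠ 0 := fun h => (hSR x hx).ne_zero ⟨0, by omega⟩ (by simp [h])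
    refine ⟨?_, by simpa using norm_normalize hx0⟩
    exact hscale _ (inv_ne_zero (norm_ne_zero_iff.2 hx0)) ▸ mem_image_of_mem _ hx
  obtain ⟨z, hzT, hz, hrec⟩ := exists_mem_closure_linearIndependent_mapClusterPt hA hirr
    inter_subset_right (hS.elim fun x hx => ⟨_, hnormalize hx⟩) fun x hx => hnormalize (hAS x hx.1)
  have hzS : z ∈ S := by
    refine (isClosed_preimage_val (t := S)
      (s := {x : EuclideanSpace ℝ (Fin n) | LinearIndependent ℚ fun i => x i})).1 hclosed
      ⟨hz, closure_mono ?_ hzT⟩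
    exact fun x hx => ⟨hSR x hx.1, hx.1⟩
  have hz1 : ‖z‖ = 1 := by
    simpa using closure_minimal inter_subset_right Metric.isClosed_sphere hzT
  refine ⟨z, hzS, fun ε hε => ?_⟩
  rw [← Nat.frequently_atTop_iff_infinite]
  refine (mapClusterPt_iff_frequently.1 hrec _ (Metric.ball_mem_nhds z hε)).mono fun m hm => ?_
  change ‖NormedSpace.normalize _ - normalize z‖ < ε
  rwa [toEuclideanLin_map_pow, ← dist_eq_norm, ← iterate_normalize_comp,
    normalize_eq_self_of_norm_eq_one hz1]
end

section
/- Let T be a nonempty compact topological space and A : T → T a continuous map. Then T contains a point c that is recurrent for A, i.e., for every open set U containing c, the set {m ∈ ℕ : A^m(c) ∈ U} is infinite. -/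
/-- Every continuous self-map of a nonempty compact topological space has a recurrent
point: a point `c` such that for every open `U ∋ c`, `A^m(c) ∈ U` for infinitely many `m`. -/
theorem exists_recurrent_point {T : Type*} [TopologicalSpace T] [CompactSpace T]
    [Nonempty T] (A : T → T) (hA : Continuous A) :
    ∃ c : T, ∀ U : Set T, IsOpen U → c ∈ U → {m : ℕ | A^[m] c ∈ U}.Infinite := by
  set S : Set (Set T) := {s | s.Nonempty ∧ IsClosed s ∧ A '' s ⊆ s} with hS
  have hzorn : ∀ c ⊆ S, IsChain (· ⊆ ·) c → c.Nonempty → ∃ lb ∈ S, ∀ s ∈ c, lb ⊆ s := by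
    intro c hcS hchain hcne
    refine ⟨⋂₀ c, ⟨?_, isClosed_sInter fun s hs => (hcS hs).2.1, ?_⟩,
      fun s hs => Set.sInter_subset_of_mem hs⟩
    · have : Nonempty c := hcne.coe_sort
      exact IsCompact.nonempty_sInter_of_directed_nonempty_isCompact_isClosed
        (IsChain.directedOn hchain.symm) (fun s hs => (hcS hs).1)
        (fun s hs => (hcS hs).2.1.isCompact) (fun s hs => (hcS hs).2.1)
    · rintro x ⟨y, hy, rfl⟩
      exact fun s hs => (hcS hs).2.2 ⟨y, hy s hs, rfl⟩
  obtain ⟨M, -, hM⟩ := zorn_superset_nonempty S hzorn Set.univ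
    ⟨Set.univ_nonempty, isClosed_univ, Set.subset_univ _⟩
  obtain ⟨hMne, hMcl, hMinv⟩ := hM.prop
  obtain ⟨c, hc⟩ := hMne
  have horb : ∀ m : ℕ, A^[m] c ∈ M := by
    intro m
    induction m with
    | zero => exact hc
    | succ n ih => rw [Function.iterate_succ_apply']; exact hMinv ⟨_, ih, rfl⟩
  refine ⟨c, fun U hU hcU => ?_⟩
  -- For each n, closure of the tail orbit is a nonempty closed invariant subset of M
  have key : ∀ n : ℕ, ∃ m ≥ n, A^[m] c ∈ U := by
    intro n
    set K := closure {x | ∃ m ≥ n, A^[m] c = x} with hK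
    have hKS : K ∈ S := by
      refine ⟨?_, isClosed_closure, ?_⟩
      · exact ⟨A^[n] c, subset_closure ⟨n, le_rfl, rfl⟩⟩
      · rintro x ⟨y, hy, rfl⟩
        have : A '' closure {x | ∃ m ≥ n, A^[m] c = x} ⊆
            closure (A '' {x | ∃ m ≥ n, A^[m] c = x}) := image_closure_subset_closure_image hA
        refine closure_mono ?_ (this ⟨y, hy, rfl⟩)
        rintro z ⟨w, ⟨m, hm, rfl⟩, rfl⟩
        exact ⟨m + 1, le_trans hm (Nat.le_succ _), Function.iterate_succ_apply' A m c⟩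
    have hKM : K ⊆ M := by
      refine closure_minimal ?_ hMcl
      rintro x ⟨m, hm, rfl⟩
      exact horb m
    have : K = M := (hM.eq_of_superset hKS hKM).symm
    have hcK : c ∈ K := this ▸ hc
    obtain ⟨x, hxU, m, hm, rfl⟩ := mem_closure_iff.mp hcK U hU hcU
    exact ⟨m, hm, hxU⟩
  intro hfin
  obtain ⟨n, hn⟩ := hfin.bddAbove
  obtain ⟨m, hm, hmU⟩ := key (n + 1)
  exact absurd (hn hmU) (by omega)
end

section
/- Let A ∈ GL_n(ℚ) with n > 1 such that ℝ^n has no proper nonzero A^m-invariant subspace defined over ℚ for any m ≥ 1. If C is a nonempty compact subset of projective space ℙ^{n-1}(ℝ) with A(C) = C (for the induced projective action) and C is contained in a countable union of hyperplanes defined over ℚ, then a contradiction follows; i.e., every nonempty compact A-invariant subset of ℙ^{n-1}(ℝ) contains a point not lying on any hyperplane defined over ℚ. -/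
open Projectivization
open scoped LinearAlgebra.Projectivization

/-- The quotient topology on a real projective space. -/
instance projectivizationTopology {K V : Type*} [DivisionRing K] [AddCommGroup V]
    [Module K V] [TopologicalSpace V] : TopologicalSpace (ℙ K V) :=
  instTopologicalSpaceQuotient

/-!
Pass to a minimal nonempty compact invariant set `D ⊆ C`. If every point of `D` lay on a
rational hyperplane, Baire's theorem would give a rational subspace whose trace on `D` has
nonempty relative interior; take such a `K` of minimal dimension. By minimality of `D`, finitely
many preimages of this relatively open piece under iterates of `A` cover `D`. Two subspaces
`A^{-j} K`, `A^{-k} K` whose pieces meet coincide, since their intersection is again rational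
with nonempty relative interior. Hence `j ↦ A^{-j} K` takes finitely many values, and `K` is a
proper nonzero rational subspace invariant under some `A^m`.
-/

open Set Module Submodule Function Topology Matrix

lemma Submodule.finrank_comap_le_of_injective {K V W : Type*} [DivisionRing K] [AddCommGroup V]
    [Module K V] [AddCommGroup W] [Module K W] {f : V →ₗ[K] W} (hf : Injective f)
    (s : Submodule K W) [FiniteDimensional K s] : finrank K (s.comap f) ≤ finrank K s :=
  (LinearEquiv.finrank_eq (equivMapOfInjective f hf _)).trans_le (finrank_mono (map_comap_le f s))

lemma Submodule.eq_of_finrank_le_finrank_inf {K V : Type*} [DivisionRing K] [AddCommGroup V]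
    [Module K V] [FiniteDimensional K V] {s t : Submodule K V}
    (hs : finrank K s ≤ finrank K ↥(s ⊓ t)) (ht : finrank K t ≤ finrank K ↥(s ⊓ t)) :
    s = t :=
  (eq_of_le_of_finrank_eq inf_le_left (le_antisymm (finrank_mono inf_le_left) hs)).symm.trans
    (eq_of_le_of_finrank_eq inf_le_right (le_antisymm (finrank_mono inf_le_right) ht))

section Rational

variable {n : ℕ}

noncomputable def ratToReal : (Fin n → ℚ) →ₗ[ℚ] (Fin n → ℝ) where
  toFun v i := v i
  map_add' v w := by ext; simp
  map_smul' c v := by ext; simp [Rat.smul_def]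

noncomputable def ratFunctional (w : Fin n → ℚ) : Module.Dual ℝ (Fin n → ℝ) :=
  dotProductEquiv ℝ (Fin n) (ratToReal w)

lemma ratFunctional_apply (w : Fin n → ℚ) (x : Fin n → ℝ) :
    ratFunctional w x = ∑ i, (w i : ℝ) * x i := rfl

lemma ratFunctional_ratToReal (w v : Fin n → ℚ) :
    ratFunctional w (ratToReal v) = (dotProductEquiv ℚ (Fin n) w v : ℝ) := by
  simp [ratFunctional_apply, dotProduct, ratToReal]

lemma ker_ratFunctional_ne_top {w : Fin n → ℚ} (hw : w ≠ 0) :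
    LinearMap.ker (ratFunctional w) ≠ ⊤ := by
  obtain ⟨i, hi⟩ := Function.ne_iff.mp hw
  rw [Ne, LinearMap.ker_eq_top]
  intro h
  have := congrArg (fun φ : Module.Dual ℝ (Fin n → ℝ) => φ (Pi.single i 1)) h
  simp [ratFunctional_apply, Pi.single_apply] at this
  exact hi this

lemma ratFunctional_comp_mulVecLin (w : Fin n → ℚ) (A : Matrix (Fin n) (Fin n) ℚ) :
    (ratFunctional w).comp (A.map ((↑) : ℚ → ℝ)).mulVecLin = ratFunctional (w ᵥ* A) := by
  refine LinearMap.ext fun x => ?_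
  change ratToReal w ⬝ᵥ (A.map ((↑) : ℚ → ℝ) *ᵥ x) = ratToReal (w ᵥ* A) ⬝ᵥ x
  rw [dotProduct_mulVec]
  congr 1
  ext j
  simp [ratToReal, vecMul, dotProduct]

lemma mulVecLin_map_pow (A : Matrix (Fin n) (Fin n) ℚ) (m : ℕ) :
    (A.map ((↑) : ℚ → ℝ)).mulVecLin ^ m =
      ((A ^ m).map ((↑) : ℚ → ℝ)).mulVecLin := by
  rw [← Matrix.toLin'_apply', ← Matrix.toLin'_apply', ← Matrix.toLin'_pow]
  exact congrArg _ (Matrix.map_pow A (Rat.castHom ℝ) m).symm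

lemma span_range_ratToReal : span ℝ (range (ratToReal (n := n))) = ⊤ := by
  rw [eq_top_iff, ← (Pi.basisFun ℝ (Fin n)).span_eq, span_le]
  rintro _ ⟨i, rfl⟩
  refine subset_span ⟨Pi.single i 1, ?_⟩
  ext j
  simp [ratToReal, Pi.single_apply, apply_ite]

lemma span_ratToReal_inf_ker (V : Submodule ℚ (Fin n → ℚ)) (w : Fin n → ℚ) :
    span ℝ (V.map ratToReal) ⊓ LinearMap.ker (ratFunctional w) =
      span ℝ ((V ⊓ LinearMap.ker (dotProductEquiv ℚ (Fin n) w)).map ratToReal) := by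
  set ψ := dotProductEquiv ℚ (Fin n) w
  set W := span ℝ ((V ⊓ LinearMap.ker ψ).map ratToReal : Set (Fin n → ℝ))
  have hW : W ≤ LinearMap.ker (ratFunctional w) := by
    rw [span_le]
    rintro _ ⟨v, hv, rfl⟩
    rw [SetLike.mem_coe, LinearMap.mem_ker, ratFunctional_ratToReal,
      LinearMap.mem_ker.mp (mem_inf.mp hv).2, Rat.cast_zero]
  refine le_antisymm ?_ (le_inf (span_mono (map_mono inf_le_left)) hW)
  by_cases hV : V ≤ LinearMap.ker ψ
  · exact inf_le_left.trans (span_mono (map_mono (le_inf le_rfl hV)))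
  obtain ⟨v₀, hv₀V, hv₀⟩ := SetLike.not_le_iff_exists.mp hV
  rw [LinearMap.mem_ker] at hv₀
  -- every `v ∈ V` splits as `(v - c • v₀) + c • v₀` with `ψ (v - c • v₀) = 0`
  have hsplit : span ℝ (V.map ratToReal) ≤ W ⊔ ℝ ∙ ratToReal v₀ := by
    rw [span_le]
    rintro _ ⟨v, hv, rfl⟩
    set c := ψ v / ψ v₀
    have hker : v - c • v₀ ∈ V ⊓ LinearMap.ker ψ :=
      ⟨V.sub_mem hv (V.smul_mem c hv₀V), by simp [c, div_mul_cancel₀ _ hv₀]⟩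
    rw [SetLike.mem_coe, ← sub_add_cancel v (c • v₀), map_add, map_smul]
    exact add_mem (mem_sup_left (subset_span ⟨_, hker, rfl⟩))
      (mem_sup_right (smul_of_tower_mem _ c (mem_span_singleton_self _)))
  have hdisj : (ℝ ∙ ratToReal v₀) ⊓ LinearMap.ker (ratFunctional w) = ⊥ := by
    refine disjoint_iff.mp (disjoint_span_singleton.mpr fun h => ?_).symm
    simp only [LinearMap.mem_ker, ratFunctional_ratToReal, Rat.cast_eq_zero] at h
    exact (hv₀ h).elim
  calc span ℝ (V.map ratToReal) ⊓ LinearMap.ker (ratFunctional w)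
      ≤ (W ⊔ ℝ ∙ ratToReal v₀) ⊓ LinearMap.ker (ratFunctional w) :=
        inf_le_inf_right _ hsplit
    _ = W := by rw [sup_inf_assoc_of_le _ hW, hdisj, sup_bot_eq]

def IsRationalSubspace (K : Submodule ℝ (Fin n → ℝ)) : Prop :=
  ∃ T : Finset (Fin n → ℚ), K = ⨅ w ∈ T, LinearMap.ker (ratFunctional w)

lemma isRationalSubspace_ker (w : Fin n → ℚ) :
    IsRationalSubspace (LinearMap.ker (ratFunctional w)) :=
  ⟨{w}, by simp⟩

lemma IsRationalSubspace.inf {K L : Submodule ℝ (Fin n → ℝ)} (hK : IsRationalSubspace K)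
    (hL : IsRationalSubspace L) : IsRationalSubspace (K ⊓ L) := by
  classical
  obtain ⟨T, rfl⟩ := hK
  obtain ⟨U, rfl⟩ := hL
  exact ⟨T ∪ U, Finset.iInf_union.symm⟩

lemma IsRationalSubspace.comap {K : Submodule ℝ (Fin n → ℝ)} (hK : IsRationalSubspace K)
    (A : Matrix (Fin n) (Fin n) ℚ) :
    IsRationalSubspace (K.comap (A.map ((↑) : ℚ → ℝ)).mulVecLin) := by
  classical
  obtain ⟨T, rfl⟩ := hK
  refine ⟨T.image (· ᵥ* A), ?_⟩
  simp only [comap_iInf, Finset.iInf_finset_image, ← LinearMap.ker_comp,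
    ratFunctional_comp_mulVecLin]

lemma iInf_ker_ratFunctional (T : Finset (Fin n → ℚ)) :
    ⨅ w ∈ T, LinearMap.ker (ratFunctional w) =
      span ℝ ((⨅ w ∈ T, LinearMap.ker (dotProductEquiv ℚ (Fin n) w)).map ratToReal) := by
  classical
  induction T using Finset.induction_on with
  | empty => simp [LinearMap.coe_range, span_range_ratToReal]
  | insert w T _ ih =>
    rw [Finset.iInf_insert, Finset.iInf_insert, ih, inf_comm, span_ratToReal_inf_ker, inf_comm]

lemma IsRationalSubspace.exists_eq_span {K : Submodule ℝ (Fin n → ℝ)}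
    (hK : IsRationalSubspace K) : ∃ S : Set (Fin n → ℚ), K = span ℝ (ratToReal '' S) := by
  obtain ⟨T, rfl⟩ := hK
  exact ⟨_, (iInf_ker_ratFunctional T).trans (by rw [map_coe])⟩

end Rational

namespace Projectivization

section Algebra

variable {K V : Type*} [Field K] [AddCommGroup V] [Module K V]

lemma mem_projectivization_iff_rep_mem (s : Submodule K V) (x : ℙ K V) :
    x ∈ s.projectivization ↔ x.rep ∈ s := by
  conv_lhs => rw [← mk_rep x]
  rfl

lemma coe_projectivization_inf (s t : Submodule K V) :
    ((s ⊓ t).projectivization : Set (ℙ K V)) =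
      (s.projectivization : Set (ℙ K V)) ∩ t.projectivization := by
  ext x
  induction x using ind with
  | h v hv => rfl

lemma preimage_map_projectivization {W : Type*} [AddCommGroup W] [Module K W] {f : V →ₗ[K] W}
    (hf : Injective f) (s : Submodule K W) :
    map f hf ⁻¹' s.projectivization = (s.comap f).projectivization := by
  ext x
  induction x using ind with
  | h v hv => rfl

lemma preimage_iterate_map_projectivization {f : Module.End K V} (hf : Injective f)
    (s : Submodule K V) (j : ℕ) :
    (map f hf)^[j] ⁻¹' s.projectivization = (s.comap (f ^ j)).projectivization := by
  induction j with
  | zero => simp [Module.End.one_eq_id]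
  | succ j ih =>
    rw [iterate_succ, preimage_comp, ih, preimage_map_projectivization, ← comap_comp, pow_succ,
      Module.End.mul_eq_comp]

lemma mk_eq_mk_iff_mul_eq_mul {ι : Type*} {v u : ι → K} (hv : v ≠ 0) (hu : u ≠ 0) :
    mk K v hv = mk K u hu ↔ ∀ i j, v i * u j = v j * u i := by
  rw [mk_eq_mk_iff']
  constructor
  · rintro ⟨a, rfl⟩ i j
    simp only [Pi.smul_apply, smul_eq_mul]
    ring
  · intro h
    obtain ⟨j, hj⟩ := Function.ne_iff.mp hu
    refine ⟨v j / u j, funext fun i => ?_⟩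
    rw [Pi.smul_apply, smul_eq_mul, div_mul_eq_mul_div, h j i, mul_div_cancel_right₀ _ hj]

end Algebra

section Topology

variable {K V : Type*} [Field K] [AddCommGroup V] [Module K V] [TopologicalSpace V]

lemma isQuotientMap_mk' : IsQuotientMap (mk' K : {v : V // v ≠ 0} → ℙ K V) :=
  isQuotientMap_quotient_mk'

lemma isOpenQuotientMap_mk' [TopologicalSpace K] [ContinuousConstSMul K V] :
    IsOpenQuotientMap (mk' K : {v : V // v ≠ 0} → ℙ K V) := by
  refine ⟨isQuotientMap_mk'.surjective, isQuotientMap_mk'.continuous, fun U hU => ?_⟩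
  let e (c : Kˣ) : {v : V // v ≠ 0} ≃ₜ {v : V // v ≠ 0} :=
    (Homeomorph.smulOfNeZero (c : K) c.ne_zero).subtype fun _ =>
      (smul_ne_zero_iff_right c.ne_zero).symm
  have he (c : Kˣ) (u : {v : V // v ≠ 0}) : (e c u : V) = c • (u : V) := rfl
  have hsat : mk' K ⁻¹' (mk' K '' U) = ⋃ c : Kˣ, e c '' U := by
    ext v
    simp only [mem_preimage, mem_image, mem_iUnion, mk'_eq_mk, mk_eq_mk_iff, Subtype.ext_iff, he]
    constructor
    · rintro ⟨u, hu, a, ha⟩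
      exact ⟨a⁻¹, u, hu, by rw [← ha, inv_smul_smul]⟩
    · rintro ⟨c, u, hu, hcu⟩
      exact ⟨u, hu, c⁻¹, by rw [← hcu, inv_smul_smul]⟩
  rw [← isQuotientMap_mk'.isOpen_preimage, hsat]
  exact isOpen_iUnion fun c => (e c).isOpenMap U hU

lemma isClosed_projectivization {s : Submodule K V} (hs : IsClosed (s : Set V)) :
    IsClosed (s.projectivization : Set (ℙ K V)) := by
  rw [← isQuotientMap_mk'.isClosed_preimage]
  exact hs.preimage continuous_subtype_val

lemma continuous_map {W : Type*} [AddCommGroup W] [Module K W] [TopologicalSpace W]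
    {f : V →ₗ[K] W} (hf : Injective f) (hfc : Continuous f) : Continuous (map f hf) :=
  Continuous.quotient_map' ((hfc.comp continuous_subtype_val).subtype_mk _) _

instance {ι : Type*} [Finite ι] [TopologicalSpace K] [IsTopologicalRing K] [T2Space K] :
    T2Space (ℙ K (ι → K)) := by
  rw [t2Space_iff_of_isOpenQuotientMap isOpenQuotientMap_mk']
  have hset : {q : {v : ι → K // v ≠ 0} × {v : ι → K // v ≠ 0} | mk' K q.1 = mk' K q.2} =
      ⋂ (i) (j), {q | q.1.1 i * q.2.1 j = q.1.1 j * q.2.1 i} := by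
    ext ⟨v, u⟩
    simp only [mem_ofPred_eq, mem_iInter, mk'_eq_mk, mk_eq_mk_iff_mul_eq_mul v.2 u.2]
  have hcoord (i : ι) : Continuous fun v : {v : ι → K // v ≠ 0} => v.1 i :=
    (continuous_apply i).comp continuous_subtype_val
  rw [hset]
  exact isClosed_iInter fun i => isClosed_iInter fun j => isClosed_eq
    (((hcoord i).comp continuous_fst).mul ((hcoord j).comp continuous_snd))
    (((hcoord j).comp continuous_fst).mul ((hcoord i).comp continuous_snd))

end Topology

end Projectivization

section Dynamics

variable {X : Type*} [TopologicalSpace X]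

def IsNonemptyCompactInvariant (g : X → X) (E : Set X) : Prop :=
  E.Nonempty ∧ IsCompact E ∧ MapsTo g E E

def ContainsRelOpen (D T : Set X) : Prop :=
  ∃ O, IsOpen O ∧ (O ∩ D).Nonempty ∧ O ∩ D ⊆ T

variable {g : X → X}

lemma IsNonemptyCompactInvariant.exists_minimal_subset [T2Space X] {C : Set X}
    (hC : IsNonemptyCompactInvariant g C) :
    ∃ D ⊆ C, Minimal (IsNonemptyCompactInvariant g) D := by
  refine zorn_superset_nonempty {E | IsNonemptyCompactInvariant g E}
    (fun c hc hchain ⟨E₀, hE₀⟩ =>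
      ⟨⋂₀ c, ⟨?_, ?_, ?_⟩, fun _ => sInter_subset_of_mem⟩) C hC
  · have : Nonempty c := ⟨⟨E₀, hE₀⟩⟩
    exact IsCompact.nonempty_sInter_of_directed_nonempty_isCompact_isClosed
      (IsChain.directedOn (r := fun E F : Set X => E ⊇ F) hchain.symm) (fun E hE => (hc hE).1)
      (fun E hE => (hc hE).2.1) (fun E hE => (hc hE).2.1.isClosed)
  · exact (hc hE₀).2.1.of_isClosed_subset
      (isClosed_sInter fun E hE => (hc hE).2.1.isClosed) (sInter_subset_of_mem hE₀)
  · exact fun x hx => mem_sInter.mpr fun E hE => (hc hE).2.2 (hx E hE)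

lemma Minimal.surjOn_of_isNonemptyCompactInvariant {D : Set X} (hg : Continuous g)
    (hD : Minimal (IsNonemptyCompactInvariant g) D) : SurjOn g D D := by
  have hgD : g '' D ⊆ D := hD.prop.2.2.image_subset
  refine (hD.eq_of_subset ⟨hD.prop.1.image g, hD.prop.2.1.image hg, ?_⟩ hgD).symm.subset
  exact fun x hx => mem_image_of_mem g (hgD hx)

lemma Minimal.exists_subset_iUnion_preimage_iterate {D O : Set X} (hg : Continuous g)
    (hD : Minimal (IsNonemptyCompactInvariant g) D) (hO : IsOpen O) (hOD : (O ∩ D).Nonempty) :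
    ∃ N, D ⊆ ⋃ j < N, g^[j] ⁻¹' O := by
  -- the points of `D` whose forward orbit avoids `O` form a compact invariant proper subset
  have hcover : D ⊆ ⋃ j, g^[j] ⁻¹' O := by
    by_contra h
    have hE : IsNonemptyCompactInvariant g (D \ ⋃ j, g^[j] ⁻¹' O) := by
      refine ⟨sdiff_nonempty.mpr h, hD.prop.2.1.diff (isOpen_iUnion fun j =>
        hO.preimage (hg.iterate j)), fun x hx => ⟨hD.prop.2.2 hx.1, fun hgx => hx.2 ?_⟩⟩
      obtain ⟨j, hj⟩ := mem_iUnion.mp hgx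
      exact mem_iUnion.mpr ⟨j + 1, by rwa [mem_preimage, iterate_succ_apply]⟩
    obtain ⟨x, hxO, hxD⟩ := hOD
    have := (hD.eq_of_subset hE sdiff_subset).symm ▸ hxD
    exact this.2 (mem_iUnion.mpr ⟨0, hxO⟩)
  refine hD.prop.2.1.elim_directed_cover (fun N => ⋃ j < N, g^[j] ⁻¹' O)
    (fun N => isOpen_biUnion fun j _ => hO.preimage (hg.iterate j)) ?_ ?_
  · intro x hx
    obtain ⟨j, hj⟩ := mem_iUnion.mp (hcover hx)
    exact mem_iUnion.mpr ⟨j + 1, mem_iUnion₂.mpr ⟨j, lt_add_one j, hj⟩⟩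
  · exact Monotone.directed_le fun N M hNM =>
      biUnion_mono (fun j hj => lt_of_lt_of_le hj hNM) fun _ _ => le_rfl

lemma IsCompact.exists_containsRelOpen_of_subset_iUnion [T2Space X] {D : Set X}
    (hD : IsCompact D) (hne : D.Nonempty) {ι : Type*} [Countable ι] {F : ι → Set X}
    (hF : ∀ i, IsClosed (F i)) (hcover : D ⊆ ⋃ i, F i) : ∃ i, ContainsRelOpen D (F i) := by
  have := isCompact_iff_compactSpace.mp hD
  have := hne.to_subtype
  obtain ⟨i, x, hx⟩ := nonempty_interior_of_iUnion_of_closed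
    (f := fun i => ((↑) : D → X) ⁻¹' F i) (fun i => (hF i).preimage continuous_subtype_val)
    (eq_univ_of_forall fun x => by simpa using hcover x.2)
  obtain ⟨O, hO, hOint⟩ :=
    isOpen_induced_iff.mp (isOpen_interior (s := ((↑) : D → X) ⁻¹' F i))
  refine ⟨i, O, hO, ⟨x, ?_, x.2⟩, fun y ⟨hyO, hyD⟩ => ?_⟩
  · change x ∈ ((↑) : D → X) ⁻¹' O
    rwa [hOint]
  · have hy : (⟨y, hyD⟩ : D) ∈ ((↑) : D → X) ⁻¹' O := hyO
    rw [hOint] at hy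
    exact interior_subset (s := ((↑) : D → X) ⁻¹' F i) hy

end Dynamics

section Periodic

variable {n : ℕ} {A : Matrix (Fin n) (Fin n) ℚ} {D : Set (ℙ ℝ (Fin n → ℝ))}

lemma exists_comap_pow_eq_self (hA : Injective (A.map ((↑) : ℚ → ℝ)).mulVecLin)
    (hD : Minimal (IsNonemptyCompactInvariant (map _ hA)) D)
    {K : Submodule ℝ (Fin n → ℝ)} (hK : IsRationalSubspace K)
    {O : Set (ℙ ℝ (Fin n → ℝ))}
    (hO : IsOpen O) (hOD : (O ∩ D).Nonempty) (hOK : O ∩ D ⊆ K.projectivization)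
    (hmin : ∀ L : Submodule ℝ (Fin n → ℝ), IsRationalSubspace L →
      ContainsRelOpen D (L.projectivization : Set (ℙ ℝ (Fin n → ℝ))) →
      finrank ℝ K ≤ finrank ℝ L) :
    ∃ m, 0 < m ∧ K.comap ((A.map ((↑) : ℚ → ℝ)).mulVecLin ^ m) = K := by
  set f := (A.map ((↑) : ℚ → ℝ)).mulVecLin
  set g := map f hA
  have hg : Continuous g := continuous_map hA f.continuous_of_finiteDimensional
  have hinj (j : ℕ) : Injective (f ^ j) := by rw [Module.End.coe_pow]; exact hA.iterate j
  have hrat (j : ℕ) : IsRationalSubspace (K.comap (f ^ j)) := by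
    rw [mulVecLin_map_pow]
    exact hK.comap _
  have hrank (j : ℕ) : finrank ℝ (K.comap (f ^ j)) ≤ finrank ℝ K :=
    finrank_comap_le_of_injective (hinj j) K
  obtain ⟨N, hN⟩ := hD.exists_subset_iUnion_preimage_iterate hg hO hOD
  have hrec (j : ℕ) : ∃ k < N, K.comap (f ^ k) = K.comap (f ^ j) := by
    obtain ⟨y, hyO, hyD⟩ := hOD
    obtain ⟨x, hxD, rfl⟩ := (hD.surjOn_of_isNonemptyCompactInvariant hg).iterate j hyD
    obtain ⟨k, hk, hxk⟩ := mem_iUnion₂.mp (hN hxD)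
    have hthick : ContainsRelOpen D (K.comap (f ^ j) ⊓ K.comap (f ^ k)).projectivization := by
      refine ⟨g^[j] ⁻¹' O ∩ g^[k] ⁻¹' O, (hO.preimage (hg.iterate j)).inter
        (hO.preimage (hg.iterate k)), ⟨x, ⟨hyO, hxk⟩, hxD⟩, ?_⟩
      rintro z ⟨⟨hzj, hzk⟩, hzD⟩
      rw [coe_projectivization_inf, ← preimage_iterate_map_projectivization hA,
        ← preimage_iterate_map_projectivization hA]
      exact ⟨hOK ⟨hzj, hD.prop.2.2.iterate j hzD⟩, hOK ⟨hzk, hD.prop.2.2.iterate k hzD⟩⟩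
    have hd := hmin _ ((hrat j).inf (hrat k)) hthick
    exact ⟨k, hk, (eq_of_finrank_le_finrank_inf ((hrank j).trans hd) ((hrank k).trans hd)).symm⟩
  obtain ⟨a, b, hab, heq⟩ := Set.Finite.exists_lt_map_eq_of_forall_mem
    (f := fun j => K.comap (f ^ j)) hrec ((finite_Iio N).image fun k => K.comap (f ^ k))
  have hsurj : Surjective (f ^ a) := by
    rw [Module.End.coe_pow]
    exact (LinearMap.injective_iff_surjective.mp hA).iterate a
  refine ⟨b - a, by omega, comap_injective_of_surjective hsurj ?_⟩
  rw [← comap_comp, ← Module.End.mul_eq_comp, ← pow_add, Nat.sub_add_cancel hab.le]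
  exact heq.symm

lemma exists_isRationalSubspace_comap_pow_eq_self
    (hA : Injective (A.map ((↑) : ℚ → ℝ)).mulVecLin)
    (hD : Minimal (IsNonemptyCompactInvariant (map _ hA)) D)
    (hDrat : ∀ x ∈ D, ∃ w ≠ 0, x ∈ (LinearMap.ker (ratFunctional w)).projectivization) :
    ∃ K, IsRationalSubspace K ∧ K ≠ ⊥ ∧ K ≠ ⊤ ∧
      ∃ m, 0 < m ∧ K.comap ((A.map ((↑) : ℚ → ℝ)).mulVecLin ^ m) = K := by
  obtain ⟨⟨w, hw⟩, hH⟩ := hD.prop.2.1.exists_containsRelOpen_of_subset_iUnion hD.prop.1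
    (F := fun w : {w : Fin n → ℚ // w ≠ 0} =>
      (LinearMap.ker (ratFunctional w.1)).projectivization)
    (fun w => isClosed_projectivization (closed_of_finiteDimensional _)) fun x hx => by
      obtain ⟨w, hw, h⟩ := hDrat x hx
      exact mem_iUnion.mpr ⟨⟨w, hw⟩, h⟩
  set S := {K : Submodule ℝ (Fin n → ℝ) |
    IsRationalSubspace K ∧ ContainsRelOpen D (K.projectivization : Set (ℙ ℝ (Fin n → ℝ)))}
  have hS : S.Nonempty := ⟨_, isRationalSubspace_ker w, hH⟩
  set K := argminOn (fun K : Submodule ℝ (Fin n → ℝ) => finrank ℝ K) S hS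
  obtain ⟨hKrat, O, hO, hOD, hOK⟩ : K ∈ S := argminOn_mem _ _ hS
  have hmin (L : Submodule ℝ (Fin n → ℝ)) (hL : L ∈ S) : finrank ℝ K ≤ finrank ℝ L :=
    argminOn_le (fun K : Submodule ℝ (Fin n → ℝ) => finrank ℝ K) S hL
  refine ⟨K, hKrat, ?_, ?_, exists_comap_pow_eq_self hA hD hKrat hO hOD hOK
    fun L h₁ h₂ => hmin L ⟨h₁, h₂⟩⟩
  · rintro hK
    obtain ⟨x, hx⟩ := hOD
    simpa [hK] using hOK hx
  · rintro hK
    have := (hmin _ ⟨isRationalSubspace_ker w, hH⟩).trans_lt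
      (finrank_lt (ker_ratFunctional_ne_top hw))
    rw [hK, finrank_top, finrank_fin_fun] at this
    exact lt_irrefl n this

end Periodic

theorem minimal_set_meets_irrational_points_general {n : ℕ}
    (A : Matrix (Fin n) (Fin n) ℚ)
    (f : (Fin n → ℝ) →ₗ[ℝ] (Fin n → ℝ))
    (hf : f = Matrix.mulVecLin (A.map (fun q : ℚ => (q : ℝ))))
    (hfinj : Function.Injective f)
    (hsub : ∀ m : ℕ, 1 ≤ m → ∀ W : Submodule ℝ (Fin n → ℝ),
      (∃ S : Set (Fin n → ℚ),
        W = Submodule.span ℝ ((fun v : Fin n → ℚ => fun i => ((v i : ℝ))) '' S)) →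
      (∀ x ∈ W, Matrix.mulVec ((A ^ m).map (fun q : ℚ => (q : ℝ))) x ∈ W) →
      W = ⊥ ∨ W = ⊤)
    (C : Set (ℙ ℝ (Fin n → ℝ))) (hC : C.Nonempty) (hcpt : IsCompact C)
    (hinv : Projectivization.map f hfinj '' C = C) :
    ∃ x ∈ C, ∀ w : Fin n → ℚ, w ≠ 0 → ∑ i, (w i : ℝ) * x.rep i ≠ 0 := by
  subst hf
  by_contra! hcon
  obtain ⟨D, hDC, hD⟩ := IsNonemptyCompactInvariant.exists_minimal_subset
    ⟨hC, hcpt, hinv ▸ mapsTo_image (map _ hfinj) C⟩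
  obtain ⟨K, hKrat, hKbot, hKtop, m, hm, hKm⟩ :=
    exists_isRationalSubspace_comap_pow_eq_self hfinj hD fun x hx => by
      obtain ⟨w, hw, h⟩ := hcon x (hDC hx)
      exact ⟨w, hw, (mem_projectivization_iff_rep_mem _ x).mpr h⟩
  obtain ⟨S, rfl⟩ := hKrat.exists_eq_span
  refine (hsub m hm _ ⟨S, rfl⟩ fun x hx => ?_).elim hKbot hKtop
  have hx' := hKm.ge hx
  rwa [mem_comap, mulVecLin_map_pow] at hx'

/-- If `A ∈ GL_n(ℚ)` (given by an injective linear action on `ℝ^n`) has, for every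
`m ≥ 1`, no proper nonzero `A^m`-invariant subspace of `ℝ^n` defined over `ℚ`, then every
nonempty compact `A`-invariant subset of `ℙ^{n-1}(ℝ)` contains a point lying on no
hyperplane defined over `ℚ`. -/
theorem minimal_set_meets_irrational_points {n : ℕ} (hn : 1 < n)
    (A : Matrix (Fin n) (Fin n) ℚ)
    (f : (Fin n → ℝ) →ₗ[ℝ] (Fin n → ℝ))
    (hf : f = Matrix.mulVecLin (A.map (fun q : ℚ => (q : ℝ))))
    (hfinj : Function.Injective f)
    (hsub : ∀ m : ℕ, 1 ≤ m → ∀ W : Submodule ℝ (Fin n → ℝ),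
      (∃ S : Set (Fin n → ℚ),
        W = Submodule.span ℝ ((fun v : Fin n → ℚ => fun i => ((v i : ℝ))) '' S)) →
      (∀ x ∈ W, Matrix.mulVec ((A ^ m).map (fun q : ℚ => (q : ℝ))) x ∈ W) →
      W = ⊥ ∨ W = ⊤)
    (C : Set (ℙ ℝ (Fin n → ℝ))) (hC : C.Nonempty) (hcpt : IsCompact C)
    (hinv : Projectivization.map f hfinj '' C = C) :
    ∃ x ∈ C, ∀ w : Fin n → ℚ, w ≠ 0 → ∑ i, (w i : ℝ) * x.rep i ≠ 0 :=
  minimal_set_meets_irrational_points_general A f hf hfinj hsub C hC hcpt hinv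
end

section
/- Let E be a field and Γ a subgroup of ℝ. Let R be the set of elements of E((t^Γ)) whose support is either finite, or of order type ω and cofinal in ℝ. Then R is a subfield of E((t^Γ)). -/
/-!
A set of exponents is finite or of order type `ω` and cofinal exactly when it meets every ray
`(-∞, a]` in a finite set. Unions and sums of such left-finite sets are left-finite, so the
series with left-finite support form a subring. For the inverse, `f⁻¹ = c t^(-v) ∑ uⁿ`, where
`v` is the order of `f`, `c` the inverse of its leading coefficient and `u = 1 - c t^(-v) f` has
positive order; every `uⁿ` is supported in the additive monoid generated by the positive part of
`supp u`. Since `Γ` is archimedean, an element of that monoid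
below `a` is a sum of at most `a / δ` generators taken from `supp u ∩ (-∞, a]`, with `δ` the least
generator, so the monoid is again left-finite.
-/

open Set
open scoped Pointwise

theorem AddSubmonoid.eq_zero_or_exists_add_of_mem_closure {M : Type*} [AddMonoid M] {s : Set M}
    {x : M} (hx : x ∈ closure s) : x = 0 ∨ ∃ y ∈ s, ∃ z ∈ closure s, y + z = x := by
  obtain ⟨l, hl, rfl⟩ := exists_list_of_mem_closure hx
  cases l with
  | nil => exact Or.inl rfl
  | cons y l =>
    refine Or.inr ⟨y, hl y List.mem_cons_self, l.sum, list_sum_mem _ fun z hz => ?_, rfl⟩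
    exact subset_closure (hl z (List.mem_cons_of_mem y hz))

namespace Set

variable {α : Type*}

def IsLeftFinite [Preorder α] (s : Set α) : Prop := ∀ a, (s ∩ Iic a).Finite

namespace IsLeftFinite

section LinearOrder

variable [LinearOrder α] {s t : Set α}

theorem mono (hst : s ⊆ t) (ht : t.IsLeftFinite) : s.IsLeftFinite :=
  fun a => (ht a).subset (inter_subset_inter_left _ hst)

theorem union (hs : s.IsLeftFinite) (ht : t.IsLeftFinite) : (s ∪ t).IsLeftFinite :=
  fun a => by simpa only [union_inter_distrib_right] using (hs a).union (ht a)

theorem _root_.Set.Finite.isLeftFinite (hs : s.Finite) : s.IsLeftFinite :=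
  fun _ => hs.subset inter_subset_left

theorem exists_isLeast (hs : s.IsLeftFinite) (hne : s.Nonempty) : ∃ a, IsLeast s a := by
  obtain ⟨b, hb⟩ := hne
  obtain ⟨a, ⟨has, hab⟩, hmin⟩ := (s ∩ Iic b).exists_min_image id (hs b) ⟨b, hb, le_rfl⟩
  refine ⟨a, has, fun x hx => ?_⟩
  rcases le_total x b with hxb | hbx
  · exact hmin x ⟨hx, hxb⟩
  · exact hab.trans hbx

theorem exists_strictMono_range_eq (hs : s.IsLeftFinite) (hinf : s.Infinite) :
    ∃ φ : ℕ → α, StrictMono φ ∧ range φ = s := by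
  let : LocallyFiniteOrder s := .ofFiniteIcc fun a b =>
    ((hs b).preimage Subtype.val_injective.injOn).subset fun x hx => ⟨x.2, hx.2⟩
  let := LinearLocallyFiniteOrder.succOrder s
  let := LinearLocallyFiniteOrder.predOrder s
  obtain ⟨a, has, hleast⟩ := hs.exists_isLeast hinf.nonempty
  let : OrderBot s := { bot := ⟨a, has⟩, bot_le := fun x => hleast x.2 }
  have : NoMaxOrder s := ⟨fun x => by
    obtain ⟨y, hys, hyx⟩ := (hinf.sdiff (hs x)).nonempty
    exact ⟨⟨y, hys⟩, lt_of_not_ge fun h => hyx ⟨hys, h⟩⟩⟩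
  let e : s ≃o ℕ := orderIsoNatOfLinearSuccPredArch
  refine ⟨fun n => e.symm n, fun m n hmn => e.symm.strictMono hmn, ?_⟩
  ext x
  exact ⟨by rintro ⟨n, rfl⟩; exact (e.symm n).2, fun hx => ⟨e ⟨x, hx⟩, by simp⟩⟩

theorem _root_.Set.isLeftFinite_iff_finite_or_exists_strictMono :
    s.IsLeftFinite ↔
      s.Finite ∨ ∃ φ : ℕ → α, StrictMono φ ∧ range φ = s ∧ ∀ a, ∃ k, a < φ k := by
  refine ⟨fun hs => ?_, ?_⟩
  · refine or_iff_not_imp_left.2 fun hinf => ?_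
    obtain ⟨φ, hφ, hrange⟩ := hs.exists_strictMono_range_eq hinf
    refine ⟨φ, hφ, hrange, fun a => ?_⟩
    by_contra! hbdd
    exact hinf ((hs a).subset fun x hx => ⟨hx, by obtain ⟨k, rfl⟩ := hrange ▸ hx; exact hbdd k⟩)
  · rintro (hfin | ⟨φ, hφ, rfl, hcofinal⟩)
    · exact hfin.isLeftFinite
    · intro a
      obtain ⟨k, hk⟩ := hcofinal a
      refine ((finite_Iio k).image φ).subset ?_
      rintro _ ⟨⟨i, rfl⟩, hia⟩
      exact ⟨i, hφ.lt_iff_lt.1 (lt_of_le_of_lt hia hk), rfl⟩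

end LinearOrder

section OrderedAddGroup

variable [AddCommGroup α] [LinearOrder α] [IsOrderedAddMonoid α] {s t : Set α}

theorem add (hs : s.IsLeftFinite) (ht : t.IsLeftFinite) : (s + t).IsLeftFinite := by
  rcases s.eq_empty_or_nonempty with rfl | hs₀
  · simpa using (finite_empty (α := α)).isLeftFinite
  rcases t.eq_empty_or_nonempty with rfl | ht₀
  · simpa using (finite_empty (α := α)).isLeftFinite
  obtain ⟨a, -, ha⟩ := hs.exists_isLeast hs₀
  obtain ⟨b, -, hb⟩ := ht.exists_isLeast ht₀
  intro c
  refine ((hs (c - b)).add (ht (c - a))).subset ?_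
  rintro _ ⟨⟨x, hx, y, hy, rfl⟩, hxy⟩
  replace hxy : x + y ≤ c := hxy
  exact ⟨x, ⟨hx, le_sub_iff_add_le.2 ((add_le_add le_rfl (hb hy)).trans hxy)⟩, y,
    ⟨hy, le_sub_iff_add_le'.2 ((add_le_add (ha hx) le_rfl).trans hxy)⟩, rfl⟩

theorem addSubmonoid_closure [Archimedean α] (hs : s.IsLeftFinite) (hpos : ∀ x ∈ s, 0 < x) :
    (AddSubmonoid.closure s : Set α).IsLeftFinite := by
  set M := AddSubmonoid.closure s
  rcases s.eq_empty_or_nonempty with rfl | hs₀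
  · simpa [M] using (finite_singleton (0 : α)).isLeftFinite
  obtain ⟨δ, hδs, hδ⟩ := hs.exists_isLeast hs₀
  have hδpos := hpos δ hδs
  have nonneg : ∀ z ∈ M, 0 ≤ z := fun z hz =>
    AddSubmonoid.closure_induction (fun y hy => (hpos y hy).le) le_rfl
      (fun _ _ _ _ => add_nonneg) hz
  have finite_Iic_nsmul : ∀ n : ℕ, ((M : Set α) ∩ Iic (n • δ)).Finite := by
    intro n
    induction n with
    | zero =>
      refine (finite_singleton 0).subset ?_
      rintro x ⟨hx, hx0⟩
      rcases AddSubmonoid.eq_zero_or_exists_add_of_mem_closure hx with rfl | ⟨y, hy, z, hzM, rfl⟩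
      · rfl
      · have hyz := add_pos_of_pos_of_nonneg (hpos y hy) (nonneg z hzM)
        exact (hyz.not_ge (by simpa using hx0)).elim
    | succ n ih =>
      refine ((finite_singleton 0).union ((hs ((n + 1) • δ)).add ih)).subset ?_
      rintro x ⟨hx, hxn⟩
      rcases AddSubmonoid.eq_zero_or_exists_add_of_mem_closure hx with rfl | ⟨y, hy, z, hzM, rfl⟩
      · exact Or.inl rfl
      · have hyx : y ≤ (n + 1) • δ := (le_add_of_nonneg_right (nonneg z hzM)).trans hxn
        have hzn : z ≤ n • δ := le_of_add_le_add_left <|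
          ((add_le_add (hδ hy) le_rfl).trans hxn).trans_eq (succ_nsmul' δ n)
        exact Or.inr ⟨y, ⟨hy, hyx⟩, z, ⟨hzM, hzn⟩, rfl⟩
  intro a
  obtain ⟨n, hn⟩ := Archimedean.arch a hδpos
  exact (finite_Iic_nsmul n).subset (inter_subset_inter_right _ (Iic_subset_Iic.2 hn))

end OrderedAddGroup

end IsLeftFinite

end Set

namespace HahnSeries

theorem isLeftFinite_support_single {Γ R : Type*} [LinearOrder Γ] [Zero R] (a : Γ) (r : R) :
    (single a r).support.IsLeftFinite :=
  ((finite_singleton a).subset support_single_subset).isLeftFinite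

variable {Γ R : Type*} [AddCommGroup Γ] [LinearOrder Γ] [IsOrderedAddMonoid Γ]

theorem support_hsum_powers_subset [CommRing R] (x : R⟦Γ⟧) :
    (SummableFamily.powers x).hsum.support ⊆ AddSubmonoid.closure {g ∈ x.support | 0 < g} := by
  refine SummableFamily.support_hsum_subset.trans (iUnion_subset fun n => ?_)
  refine (SummableFamily.support_pow_subset_closure _ n).trans (AddSubmonoid.closure_mono ?_)
  split_ifs with hx
  · exact fun g hg => ⟨hg, WithTop.coe_lt_coe.1 (hx.trans_le (orderTop_le_of_coeff_ne_zero hg))⟩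
  · simp

variable (Γ R) in
def leftFiniteSubring [Ring R] : Subring R⟦Γ⟧ where
  carrier := {f | f.support.IsLeftFinite}
  zero_mem' := by simpa using finite_empty.isLeftFinite
  one_mem' := isLeftFinite_support_single (0 : Γ) (1 : R)
  add_mem' hf hg := (hf.union hg).mono (support_add_subset _ _)
  neg_mem' hf := by simpa [support_neg]
  mul_mem' hf hg := (hf.add hg).mono support_mul_subset

theorem isLeftFinite_support_inv [Field R] [Archimedean Γ] {f : R⟦Γ⟧}
    (hf : f.support.IsLeftFinite) : f⁻¹.support.IsLeftFinite := by
  set s := single (-f.order) f.leadingCoeff⁻¹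
  set u := 1 - s * f
  have hu : u.support.IsLeftFinite := (leftFiniteSubring Γ R).sub_mem
    (isLeftFinite_support_single (0 : Γ) (1 : R))
    ((leftFiniteSubring Γ R).mul_mem (isLeftFinite_support_single _ _) hf)
  rw [inv_def]
  refine ((isLeftFinite_support_single _ _).add ?_).mono support_mul_subset
  exact ((hu.mono fun g hg => hg.1).addSubmonoid_closure fun g hg => hg.2).mono
    (support_hsum_powers_subset u)

variable (Γ R) in
def leftFiniteSubfield [Field R] [Archimedean Γ] : Subfield R⟦Γ⟧ where
  __ := leftFiniteSubring Γ R
  inv_mem' _ hf := isLeftFinite_support_inv hf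

end HahnSeries

theorem AddSubgroup.forall_exists_lt_iff_of_strictMono {G : Type*} [AddCommGroup G] [LinearOrder G]
    [IsOrderedAddMonoid G] [Archimedean G] {Γ : AddSubgroup G} {φ : ℕ → Γ} (hφ : StrictMono φ) :
    (∀ y : Γ, ∃ k, y < φ k) ↔ ∀ r : G, ∃ k, r < φ k := by
  refine ⟨fun h r => ?_, fun h y => h y⟩
  obtain ⟨n, hn⟩ := Archimedean.arch r (sub_pos.2 (hφ zero_lt_one) : (0 : Γ) < φ 1 - φ 0)
  obtain ⟨k, hk⟩ := h (n • (φ 1 - φ 0))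
  exact ⟨k, hn.trans_lt hk⟩

/-- Let `E` be a field and `Γ` a subgroup of `ℝ`.  The set of generalized power series
whose support is either finite, or of order type `ω` and cofinal in `ℝ`, is a subfield of
`E((t^Γ))`. -/
theorem omega_type_series_subfield (E : Type*) [Field E] (Γ : AddSubgroup ℝ) :
    ∃ F : Subfield (HahnSeries ↥Γ E),
      (F : Set (HahnSeries ↥Γ E)) =
        {f : HahnSeries ↥Γ E |
          f.support.Finite ∨
          ∃ φ : ℕ → ↥Γ, StrictMono φ ∧ Set.range φ = f.support ∧
            ∀ r : ℝ, ∃ k : ℕ, r < (φ k : ℝ)} := by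
  refine ⟨HahnSeries.leftFiniteSubfield Γ E, Set.ext fun f => ?_⟩
  change f.support.IsLeftFinite ↔ _
  rw [isLeftFinite_iff_finite_or_exists_strictMono]
  exact or_congr_right <| exists_congr fun φ => and_congr_right fun hφ =>
    and_congr_right fun _ => AddSubgroup.forall_exists_lt_iff_of_strictMono hφ
end

section
/- Let G_0 be a finite group, U a subgroup of the direct product G_0^ℤ (functions ℤ → G_0) that is normal in G_0^ℤ, stable under the shift automorphism, and which surjects onto each coordinate factor G_0 under the coordinate projections. If U is finite, then G_0 is abelian. -/
/-- Let `G₀` be a finite group and `U` a finite subgroup of `G₀^ℤ` which is normal,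
stable under the shift automorphism, and projects onto `G₀` under every coordinate
projection.  Then `G₀` is abelian. -/
theorem abelian_of_finite_shift_stable_normal (G₀ : Type*) [Group G₀] [Finite G₀]
    (U : Subgroup (ℤ → G₀))
    (hnorm : U.Normal)
    (hshift : ∀ f ∈ U, (fun i => f (i + 1)) ∈ U)
    (hsurj : ∀ (i : ℤ) (g : G₀), ∃ f ∈ U, f i = g)
    (hfin : (U : Set (ℤ → G₀)).Finite) :
    ∀ x y : G₀, x * y = y * x := by
  intro x y
  obtain ⟨f, hf, hf0⟩ := hsurj 0 x
  set c : G₀ := y * x * y⁻¹ * x⁻¹ with hc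
  let d : ℤ → G₀ := fun i => if i = 0 then y else 1
  have hg : d * f * d⁻¹ * f⁻¹ ∈ U :=
    U.mul_mem (hnorm.conj_mem f hf d) (U.inv_mem hf)
  let e : ℕ → ℤ → G₀ := fun k i => if i = -(k : ℤ) then c else 1
  have he : ∀ k, e k ∈ U := by
    intro k
    induction k with
    | zero =>
      have : e 0 = d * f * d⁻¹ * f⁻¹ := by
        funext i
        by_cases hi : i = 0
        · subst hi
          simp [e, d, hf0, hc, Pi.mul_apply, Pi.inv_apply]
        · simp [e, d, hi, Pi.mul_apply, Pi.inv_apply]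
      rw [this]; exact hg
    | succ k ih =>
      have : e (k + 1) = fun i => e k (i + 1) := by
        funext i
        have : (i = -((k : ℤ) + 1)) ↔ (i + 1 = -(k : ℤ)) := by omega
        simp only [e, Nat.cast_add, Nat.cast_one, this]
      rw [this]; exact hshift (e k) ih
  have hc1 : c = 1 := by
    by_contra hc1
    have hinj : Function.Injective e := by
      intro a b hab
      by_contra hne
      have := congrFun hab (-(a : ℤ))
      have hab' : ¬ (-(a : ℤ) = -(b : ℤ)) := by
        intro h; exact hne (by exact_mod_cast neg_injective h)
      simp [e, hab'] at this
      exact hc1 this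
    exact (Set.infinite_of_injective_forall_mem hinj he) hfin
  have : y * x = x * y := by
    have h1 : y * x * y⁻¹ * x⁻¹ = 1 := hc1
    have := mul_eq_one_iff_eq_inv.mp h1
    rw [inv_inv] at this
    calc y * x = y * x * y⁻¹ * y := by group
    _ = x * y := by rw [this]
  exact this.symm
end
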